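/- arXiv:2506.03690 — 2 statements merged into one kernel-verified Lean document; each statement's English description precedes it below -/
import Mathlib

section
/- Fix reals m₁,…,m_n, γ₀ > 0, and τ > 0. The function F(p) = ∑_i [log(1 + exp(m_i - n·p_i·γ₀)) + τ·p_i·log(n·p_i)] defined on the open probability simplex {p ∈ ℝⁿ : p_i > 0, ∑ p_i = 1} is strictly convex and attains a unique minimizer on the simplex closure's interior. -/
/-!
Each summand `log (1 + exp (mᵢ - n x γ₀)) + τ x log (n x)` is strictly convex on `[0, ∞)`: the
softplus of an affine function is convex and `x log x` is strictly convex. Hence the objective is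
strictly convex on the simplex and has at most one minimiser. It extends continuously to the
closed simplex, which is compact, so it has a minimiser there. That minimiser has no zero
coordinate: the slope of the entropy term at `0` is `-∞`, while by convexity the loss incurred by
removing a little mass from a positive coordinate is only linear in that mass, so transferring it
to the zero coordinate would lower the objective.
-/

open Real Set Filter Topology Function

def openStdSimplex (ι : Type*) [Fintype ι] : Set (ι → ℝ) :=
  {p | (∀ i, 0 < p i) ∧ ∑ i, p i = 1}

lemma StrictConvexOn.const_mul {E : Type*} [AddCommMonoid E] [SMul ℝ E] {s : Set E}
    {f : E → ℝ} {c : ℝ} (hc : 0 < c) (hf : StrictConvexOn ℝ s f) :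
    StrictConvexOn ℝ s fun x => c * f x :=
  ⟨hf.1, fun x hx y hy hxy a b ha hb hab => by
    simpa only [smul_eq_mul, mul_add, mul_left_comm c] using
      mul_lt_mul_of_pos_left (hf.2 hx hy hxy ha hb hab) hc⟩

section Separable

variable {ι : Type*} [Fintype ι]

lemma openStdSimplex_subset_stdSimplex : openStdSimplex ι ⊆ stdSimplex ℝ ι :=
  fun _ hp => ⟨fun i => (hp.1 i).le, hp.2⟩

lemma convex_openStdSimplex : Convex ℝ (openStdSimplex ι) := by
  intro p hp q hq a b ha hb hab
  refine ⟨fun i => convex_Ioi (0 : ℝ) (hp.1 i) (hq.1 i) ha hb hab, ?_⟩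
  simp only [Pi.add_apply, Pi.smul_apply, smul_eq_mul, Finset.sum_add_distrib,
    ← Finset.mul_sum, hp.2, hq.2, mul_one, hab]

lemma strictConvexOn_sum_apply {s : Set ℝ} {g : ι → ℝ → ℝ}
    (hg : ∀ i, StrictConvexOn ℝ s (g i)) :
    StrictConvexOn ℝ (univ.pi fun _ => s) fun p => ∑ i, g i (p i) := by
  refine ⟨convex_pi fun i _ => (hg i).1, fun p hp q hq hpq a b ha hb hab => ?_⟩
  obtain ⟨j, hj⟩ : ∃ j, p j ≠ q j := ne_iff.1 hpq
  simp only [Pi.add_apply, Pi.smul_apply, smul_eq_mul, Finset.mul_sum, ← Finset.sum_add_distrib]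
  refine Finset.sum_lt_sum (fun i _ => ?_) ⟨j, Finset.mem_univ j,
    (hg j).2 (hp j trivial) (hq j trivial) hj ha hb hab⟩
  exact (hg i).convexOn.2 (hp i trivial) (hq i trivial) ha.le hb.le hab

lemma strictConvexOn_openStdSimplex_sum {g : ι → ℝ → ℝ}
    (hg : ∀ i, StrictConvexOn ℝ (Ici 0) (g i)) :
    StrictConvexOn ℝ (openStdSimplex ι) fun p => ∑ i, g i (p i) :=
  (strictConvexOn_sum_apply hg).subset (fun _ hp i _ => (hp.1 i).le) convex_openStdSimplex

lemma exists_add_lt_of_tendsto_slope_atBot {f h : ℝ → ℝ} {x : ℝ} (hx : 0 < x)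
    (hf : Tendsto (slope f 0) (𝓝[>] 0) atBot) (hh : ConvexOn ℝ (Icc 0 x) h) :
    ∃ ε ∈ Ioo 0 x, f ε + h (x - ε) < f 0 + h x := by
  obtain ⟨ε, hε, hslope⟩ := (Filter.Eventually.and (Ioo_mem_nhdsGT hx)
    (hf.eventually (eventually_lt_atBot ((h x - h 0) / x)))).exists
  refine ⟨ε, hε, ?_⟩
  have hchord := hh.2 (left_mem_Icc.2 hx.le) (right_mem_Icc.2 hx.le)
    (div_nonneg hε.1.le hx.le) (sub_nonneg.2 ((div_le_one hx).2 hε.2.le)) (add_sub_cancel _ _)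
  have hpoint : (ε / x) • (0 : ℝ) + (1 - ε / x) • x = x - ε := by
    simp only [smul_eq_mul]; field_simp; ring
  rw [hpoint, smul_eq_mul, smul_eq_mul] at hchord
  have hf_lt : f ε - f 0 < ε * ((h x - h 0) / x) := by
    rw [slope_def_field, sub_zero, div_lt_iff₀' hε.1] at hslope
    exact hslope
  have hrhs : ε / x * h 0 + (1 - ε / x) * h x = h x - ε * ((h x - h 0) / x) := by
    field_simp; ring
  linarith

lemma sum_update_update_sub_sum [DecidableEq ι] (g : ι → ℝ → ℝ) (p : ι → ℝ) {j k : ι}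
    (hjk : j ≠ k) (a b : ℝ) :
    ∑ i, g i (update (update p j a) k b i) - ∑ i, g i (p i) =
      (g j a - g j (p j)) + (g k b - g k (p k)) := by
  rw [← Finset.sum_sub_distrib, Fintype.sum_eq_add j k hjk]
  · simp [hjk]
  · rintro i ⟨hij, hik⟩
    simp [hij, hik]

theorem pos_of_isMinOn_stdSimplex {g : ι → ℝ → ℝ} (hconv : ∀ i, ConvexOn ℝ (Ici 0) (g i))
    (hslope : ∀ i, Tendsto (slope (g i) 0) (𝓝[>] 0) atBot) {p : ι → ℝ}
    (hp : p ∈ stdSimplex ℝ ι) (hmin : IsMinOn (fun p => ∑ i, g i (p i)) (stdSimplex ℝ ι) p)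
    (j : ι) : 0 < p j := by
  classical
  by_contra! hj
  have hpj : p j = 0 := le_antisymm hj (hp.1 j)
  obtain ⟨k, hk⟩ : ∃ k, 0 < p k := by
    by_contra! h
    linarith [Finset.sum_nonpos fun i (_ : i ∈ Finset.univ) => h i, hp.2]
  have hjk : j ≠ k := by rintro rfl; linarith
  obtain ⟨ε, hε, hlt⟩ := exists_add_lt_of_tendsto_slope_atBot hk (hslope j)
    ((hconv k).subset Icc_subset_Ici_self (convex_Icc 0 _))
  have hq : update (update p j ε) k (p k - ε) ∈ stdSimplex ℝ ι := by
    refine ⟨fun i => ?_, ?_⟩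
    · simp only [update_apply]
      split_ifs <;> linarith [hp.1 i, hε.1, hε.2]
    · have := sum_update_update_sub_sum (fun _ x => x) p hjk ε (p k - ε)
      linarith [hp.2]
  have hle : ∑ i, g i (p i) ≤ ∑ i, g i (update (update p j ε) k (p k - ε) i) := hmin hq
  have := sum_update_update_sub_sum g p hjk ε (p k - ε)
  rw [hpj] at this
  linarith

theorem existsUnique_isMinOn_openStdSimplex [Nonempty ι] {g : ι → ℝ → ℝ}
    (hcont : ∀ i, Continuous (g i)) (hconv : ∀ i, StrictConvexOn ℝ (Ici 0) (g i))
    (hslope : ∀ i, Tendsto (slope (g i) 0) (𝓝[>] 0) atBot) :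
    ∃! p, p ∈ openStdSimplex ι ∧
      IsMinOn (fun p => ∑ i, g i (p i)) (openStdSimplex ι) p := by
  classical
  obtain ⟨p, hpK, hpmin⟩ := (isCompact_stdSimplex ℝ ι).exists_isMinOn
    ⟨_, single_mem_stdSimplex ℝ (Classical.arbitrary ι)⟩
    (continuous_finsetSum _ fun i _ => (hcont i).comp (continuous_apply i)).continuousOn
  have hpS : p ∈ openStdSimplex ι :=
    ⟨pos_of_isMinOn_stdSimplex (fun i => (hconv i).convexOn) hslope hpK hpmin, hpK.2⟩
  have hpmin' := hpmin.on_subset openStdSimplex_subset_stdSimplex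
  exact ⟨p, ⟨hpS, hpmin'⟩, fun q ⟨hqS, hqmin⟩ =>
    (strictConvexOn_openStdSimplex_sum hconv).eq_of_isMinOn hqmin hpmin' hqS hpS⟩

end Separable

lemma convexOn_log_one_add_exp : ConvexOn ℝ univ fun t => log (1 + exp t) := by
  have hderiv (t : ℝ) : HasDerivAt (fun t => log (1 + exp t)) (sigmoid t) t := by
    convert ((hasDerivAt_exp t).const_add 1).log (by positivity) using 1
    rw [sigmoid_def, exp_neg]
    field_simp
    ring
  have hderiv_eq : deriv (fun t => log (1 + exp t)) = sigmoid := funext fun t => (hderiv t).deriv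
  exact Monotone.convexOn_univ_of_deriv (fun t => (hderiv t).differentiableAt)
    (hderiv_eq ▸ sigmoid_monotone)

lemma mul_log_mul_eq {b : ℝ} (hb : b ≠ 0) (x : ℝ) : x * log (b * x) = x * log x + log b * x := by
  rcases eq_or_ne x 0 with rfl | hx
  · simp
  · rw [log_mul hb hx]; ring

section GammaPO

-- Logistic loss at the adaptive margin `n x γ₀`, plus `τ` times the summand of `KL(p ‖ uniform)`.
noncomputable def gammaPOLoss (m n γ₀ τ x : ℝ) : ℝ :=
  log (1 + exp (m - n * x * γ₀)) + τ * x * log (n * x)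

variable {m n γ₀ τ : ℝ}

lemma continuous_gammaPOLoss (hn : n ≠ 0) : Continuous (gammaPOLoss m n γ₀ τ) := by
  have hsoftplus : Continuous fun x => log (1 + exp (m - n * x * γ₀)) :=
    Continuous.log (by fun_prop) fun x => by positivity
  have hent : Continuous fun x => τ * (x * log x + log n * x) :=
    continuous_const.mul (continuous_mul_log.add (by fun_prop))
  exact hsoftplus.add (hent.congr fun x => by rw [mul_assoc, mul_log_mul_eq hn])

lemma strictConvexOn_gammaPOLoss (hn : n ≠ 0) (hτ : 0 < τ) :
    StrictConvexOn ℝ (Ici 0) (gammaPOLoss m n γ₀ τ) := by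
  have hsoftplus : ConvexOn ℝ univ fun x => log (1 + exp (m - n * x * γ₀)) := by
    have h := convexOn_log_one_add_exp.comp_affineMap (AffineMap.lineMap (k := ℝ) m (m - n * γ₀))
    rw [preimage_univ] at h
    refine h.congr fun x _ => ?_
    simp only [comp_apply, AffineMap.lineMap_apply_ring']
    ring_nf
  have hent : StrictConvexOn ℝ (Ici 0) fun x => τ * x * log (n * x) :=
    ((strictConvexOn_mul_log.add_convexOn ((LinearMap.mul ℝ ℝ (log n)).convexOn
      (convex_Ici 0))).const_mul hτ).congr fun x _ => by
        simp only [Pi.add_apply, LinearMap.mul_apply']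
        rw [mul_assoc, mul_log_mul_eq hn]
  exact (hsoftplus.subset (subset_univ _) (convex_Ici 0)).add_strictConvexOn hent

lemma tendsto_slope_gammaPOLoss (hn : n ≠ 0) (hτ : 0 < τ) :
    Tendsto (slope (gammaPOLoss m n γ₀ τ) 0) (𝓝[>] 0) atBot := by
  set L : ℝ → ℝ := fun x => log (1 + exp (m - n * x * γ₀))
  have hL : Tendsto (slope L 0) (𝓝[>] 0) (𝓝 (deriv L 0)) := by
    have : DifferentiableAt ℝ L 0 := by fun_prop (disch := positivity)
    exact (hasDerivAt_iff_tendsto_slope_left_right.1 this.hasDerivAt).2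
  have hlog : Tendsto (fun ε => τ * (log n + log ε)) (𝓝[>] 0) atBot :=
    (tendsto_atBot_add_const_left _ _ tendsto_log_nhdsGT_zero).const_mul_atBot hτ
  refine (hL.add_atBot hlog).congr' (eventually_nhdsWithin_of_forall fun ε (hε : 0 < ε) => ?_)
  simp only [slope_def_field, gammaPOLoss, L, log_mul hn hε.ne']
  have hε0 := hε.ne'
  field_simp
  ring

end GammaPO

theorem gammaPO_objective_strict_convex_unique_min_general
    (n : ℕ) (hn : 1 ≤ n) (m : Fin n → ℝ) (γ₀ τ : ℝ) (hτ : 0 < τ) :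
    StrictConvexOn ℝ {p : Fin n → ℝ | (∀ i, 0 < p i) ∧ ∑ i, p i = 1}
      (fun p => ∑ i, (Real.log (1 + Real.exp (m i - n * p i * γ₀)) +
        τ * p i * Real.log (n * p i))) ∧
    ∃! p : Fin n → ℝ, ((∀ i, 0 < p i) ∧ ∑ i, p i = 1) ∧
      ∀ q : Fin n → ℝ, ((∀ i, 0 < q i) ∧ ∑ i, q i = 1) →
        (∑ i, (Real.log (1 + Real.exp (m i - n * p i * γ₀)) + τ * p i * Real.log (n * p i))) ≤
        (∑ i, (Real.log (1 + Real.exp (m i - n * q i * γ₀)) + τ * q i * Real.log (n * q i))) := by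
  have hn0 : (n : ℝ) ≠ 0 := Nat.cast_ne_zero.2 (by omega)
  have : Nonempty (Fin n) := ⟨⟨0, hn⟩⟩
  have hconv (i : Fin n) := strictConvexOn_gammaPOLoss (m := m i) (γ₀ := γ₀) hn0 hτ
  have hmin := existsUnique_isMinOn_openStdSimplex (fun i => continuous_gammaPOLoss hn0) hconv
    (fun i => tendsto_slope_gammaPOLoss hn0 hτ)
  simp only [isMinOn_iff] at hmin
  exact ⟨strictConvexOn_openStdSimplex_sum hconv, hmin⟩

theorem gammaPO_objective_strict_convex_unique_min
    (n : ℕ) (hn : 1 ≤ n) (m : Fin n → ℝ) (γ₀ τ : ℝ) (hγ₀ : 0 < γ₀) (hτ : 0 < τ) :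
    StrictConvexOn ℝ {p : Fin n → ℝ | (∀ i, 0 < p i) ∧ ∑ i, p i = 1}
      (fun p => ∑ i, (Real.log (1 + Real.exp (m i - n * p i * γ₀)) +
        τ * p i * Real.log (n * p i))) ∧
    ∃! p : Fin n → ℝ, ((∀ i, 0 < p i) ∧ ∑ i, p i = 1) ∧
      ∀ q : Fin n → ℝ, ((∀ i, 0 < q i) ∧ ∑ i, q i = 1) →
        (∑ i, (Real.log (1 + Real.exp (m i - n * p i * γ₀)) + τ * p i * Real.log (n * p i))) ≤
        (∑ i, (Real.log (1 + Real.exp (m i - n * q i * γ₀)) + τ * q i * Real.log (n * q i))) :=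
  gammaPO_objective_strict_convex_unique_min_general n hn m γ₀ τ hτ
end

section
/- Let σ be the sigmoid, γ₀ ∈ ℝ fixed, and define for m > 0 the function ε(m, δ) = δ(1 - σ(m - γ₀))/(log(1 + e^{m+γ₀}) - log(1 + e^{γ₀-m})) with δ > 0 fixed. Then ∂ε/∂m < 0 for all sufficiently large m; i.e., the effective label-smoothing parameter decreases in the reward margin. -/
noncomputable def sigmoid (x : ℝ) : ℝ := 1 / (1 + Real.exp (-x))

/-
Write ε = N / D. The numerator N(m) = δ σ(γ₀ - m) is positive and strictly decreasing, while the
denominator D(m) = s(m + γ₀) - s(γ₀ - m), with s(x) = log(1 + eˣ) the softplus, is strictly increasing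
because s' = σ > 0, and is positive as soon as m > 0. A positive decreasing function divided by a
positive increasing one has negative derivative, so any M > 0 works.
-/

theorem sigmoid_eq_real_sigmoid : sigmoid = Real.sigmoid :=
  funext fun _ => one_div _

theorem strictMono_log_one_add_exp : StrictMono fun x : ℝ => Real.log (1 + Real.exp x) :=
  fun _ _ hxy => Real.log_lt_log (by positivity) (by gcongr)

theorem hasDerivAt_log_one_add_exp (x : ℝ) :
    HasDerivAt (fun y => Real.log (1 + Real.exp y)) (Real.sigmoid x) x := by
  convert ((Real.hasDerivAt_exp x).const_add 1).log (by positivity) using 1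
  rw [Real.sigmoid_def, Real.exp_neg]
  field_simp
  ring

theorem HasDerivAt.log_one_add_exp {f : ℝ → ℝ} {f' x : ℝ} (hf : HasDerivAt f f' x) :
    HasDerivAt (fun y => Real.log (1 + Real.exp (f y))) (Real.sigmoid (f x) * f') x :=
  (hasDerivAt_log_one_add_exp (f x)).comp x hf

theorem deriv_div_neg_of_hasDerivAt {f g : ℝ → ℝ} {f' g' x : ℝ} (hf : HasDerivAt f f' x)
    (hg : HasDerivAt g g' x) (hf₀ : 0 ≤ f x) (hf' : f' < 0) (hg₀ : 0 < g x) (hg' : 0 ≤ g') :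
    deriv (fun y => f y / g y) x < 0 := by
  rw [(hf.fun_div hg hg₀.ne').deriv]
  apply div_neg_of_neg_of_pos _ (by positivity)
  nlinarith [mul_neg_of_neg_of_pos hf' hg₀, mul_nonneg hf₀ hg']

theorem epsilon_eventually_decreasing (γ₀ δ : ℝ) (hδ : 0 < δ) :
    ∃ M : ℝ, ∀ m : ℝ, M ≤ m →
      deriv (fun m' : ℝ => δ * (1 - sigmoid (m' - γ₀)) /
        (Real.log (1 + Real.exp (m' + γ₀)) - Real.log (1 + Real.exp (γ₀ - m')))) m < 0 := by
  refine ⟨1, fun m hm => ?_⟩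
  rw [sigmoid_eq_real_sigmoid]
  set σ := Real.sigmoid (m - γ₀)
  have hσ₁ : σ < 1 := Real.sigmoid_lt_one _
  have hN : HasDerivAt (fun m' => δ * (1 - Real.sigmoid (m' - γ₀))) (δ * -(σ * (1 - σ))) m :=
    (((Real.hasDerivAt_sigmoid _).comp_sub_const m γ₀).const_sub 1).const_mul δ
  have hD := ((hasDerivAt_id m).add_const γ₀).log_one_add_exp.fun_sub
    ((hasDerivAt_id m).const_sub γ₀).log_one_add_exp
  have hD₀ : 0 < Real.log (1 + Real.exp (m + γ₀)) - Real.log (1 + Real.exp (γ₀ - m)) :=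
    sub_pos.2 (strictMono_log_one_add_exp (by linarith))
  have hσ' : 0 < σ * (1 - σ) := mul_pos (Real.sigmoid_pos _) (sub_pos.2 hσ₁)
  refine deriv_div_neg_of_hasDerivAt hN hD (mul_pos hδ (sub_pos.2 hσ₁)).le
    (mul_neg_of_pos_of_neg hδ (neg_neg_of_pos hσ')) hD₀ ?_
  simp only [id, mul_one, mul_neg, sub_neg_eq_add]
  exact add_nonneg (Real.sigmoid_nonneg _) (Real.sigmoid_nonneg _)
end
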